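/- Let U = diag(1, e^{−2πi/3}, e^{−4πi/3}) ∈ M₃(ℂ). Then for all a, b, c ≥ 0, θ ∈ ℝ and all X ∈ M₃(ℂ), U* Φ[a,b,c;θ](X) U = Φ[a,b,c;θ−2π/3](X). Moreover p_θ = p_{θ−2π/3}, so that the map X ↦ U* Φ_θ(t)(X) U equals Φ_{θ−2π/3}(t) for every t > 0. -/

import Mathlib

open Complex Matrix

noncomputable def PhiMap (a b c θ : ℝ) (X : Matrix (Fin 3) (Fin 3) ℂ) :
    Matrix (Fin 3) (Fin 3) ℂ :=
  !![(a : ℂ) * X 0 0 + (b : ℂ) * X 1 1 + (c : ℂ) * X 2 2,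
       -exp (θ * I) * X 0 1, -exp (-θ * I) * X 0 2;
     -exp (-θ * I) * X 1 0,
       (c : ℂ) * X 0 0 + (a : ℂ) * X 1 1 + (b : ℂ) * X 2 2, -exp (θ * I) * X 1 2;
     -exp (θ * I) * X 2 0, -exp (-θ * I) * X 2 1,
       (b : ℂ) * X 0 0 + (c : ℂ) * X 1 1 + (a : ℂ) * X 2 2]

noncomputable def pTheta (θ : ℝ) : ℝ :=
  max (2 * Real.cos (θ + 2 * Real.pi / 3))
    (max (2 * Real.cos θ) (2 * Real.cos (θ - 2 * Real.pi / 3)))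

noncomputable def PhiT (θ t : ℝ) : Matrix (Fin 3) (Fin 3) ℂ → Matrix (Fin 3) (Fin 3) ℂ :=
  PhiMap (1 - (pTheta θ - 1) * t / (1 - t + t ^ 2))
         ((pTheta θ - 1) * t ^ 2 / (1 - t + t ^ 2))
         ((pTheta θ - 1) / (1 - t + t ^ 2)) θ

noncomputable def Umat : Matrix (Fin 3) (Fin 3) ℂ :=
  Matrix.diagonal ![1, exp (-(2 * Real.pi / 3 : ℝ) * I), exp (-(4 * Real.pi / 3 : ℝ) * I)]

/-!
Conjugating by a diagonal unitary `diag(d₀, d₁, d₂)` fixes the diagonal of a matrix and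
multiplies its `(i, j)` entry by `conj dᵢ * dⱼ`. For `d = (1, ζ, ζ²)` with `ζ = e^{-2πi/3}` a
cube root of unity this factor is `ζ` on the entries of `Φ` carrying `e^{iθ}` and `ζ⁻¹` on those
carrying `e^{-iθ}`, which is exactly the shift `θ ↦ θ - 2π/3`. The same shift only permutes the
three cosines defining `p_θ`, so the coefficients of `Φ_θ(t)` do not change.
-/

namespace Matrix

variable {n α : Type*} [Fintype n] [DecidableEq n] [Semiring α] [StarRing α]

theorem diagonal_conjTranspose_mul_mul_diagonal (d : n → α) (M : Matrix n n α) (i j : n) :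
    ((diagonal d)ᴴ * M * diagonal d) i j = star (d i) * M i j * d j := by
  rw [diagonal_conjTranspose, mul_diagonal, diagonal_mul, Pi.star_apply]

end Matrix

theorem PhiMap_conj_diagonal_cube_root {a b c θ φ : ℝ} {ζ : ℂ} (hζ : ζ ^ 3 = 1)
    (hφ : exp (φ * I) = exp (θ * I) * ζ) (X : Matrix (Fin 3) (Fin 3) ℂ) :
    (diagonal ![1, ζ, ζ ^ 2])ᴴ * PhiMap a b c θ X * diagonal ![1, ζ, ζ ^ 2] =
      PhiMap a b c φ X := by
  have hstar : star ζ = ζ⁻¹ :=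
    (Complex.inv_eq_conj (Complex.norm_eq_one_of_pow_eq_one hζ three_ne_zero)).symm
  have hζ0 : ζ ≠ 0 := by rintro rfl; norm_num at hζ
  have hφ' : exp (-(φ * I)) = exp (-(θ * I)) * ζ⁻¹ := by
    rw [Complex.exp_neg, Complex.exp_neg, hφ, mul_inv]
  ext i j
  rw [diagonal_conjTranspose_mul_mul_diagonal]
  fin_cases i <;> fin_cases j <;> simp [PhiMap, hφ, hφ', hstar] <;> field_simp <;> grind

theorem Umat_eq_diagonal :
    Umat =
      diagonal ![1, exp (-(2 * Real.pi / 3 : ℝ) * I), exp (-(2 * Real.pi / 3 : ℝ) * I) ^ 2] := by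
  rw [Umat, ← Complex.exp_nat_mul]
  push_cast
  ring_nf

theorem exp_neg_two_pi_div_three_mul_I_pow_three : exp (-(2 * Real.pi / 3 : ℝ) * I) ^ 3 = 1 := by
  rw [← Complex.exp_nat_mul, Complex.exp_eq_one_iff]
  exact ⟨-1, by push_cast; ring⟩

theorem Umat_conjTranspose_mul_PhiMap_mul_Umat (a b c θ : ℝ) (X : Matrix (Fin 3) (Fin 3) ℂ) :
    Umatᴴ * PhiMap a b c θ X * Umat = PhiMap a b c (θ - 2 * Real.pi / 3) X := by
  rw [Umat_eq_diagonal]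
  refine PhiMap_conj_diagonal_cube_root exp_neg_two_pi_div_three_mul_I_pow_three ?_ X
  rw [← Complex.exp_add]
  push_cast
  ring_nf

theorem pTheta_sub_two_pi_div_three (θ : ℝ) : pTheta (θ - 2 * Real.pi / 3) = pTheta θ := by
  have h₁ : θ - 2 * Real.pi / 3 + 2 * Real.pi / 3 = θ := by ring
  have h₂ : θ - 2 * Real.pi / 3 - 2 * Real.pi / 3 = θ + 2 * Real.pi / 3 - 2 * Real.pi := by ring
  rw [pTheta, pTheta, h₁, h₂, Real.cos_sub_two_pi]
  ac_rfl

theorem conjugation_shift (a b c θ : ℝ) :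
    (∀ X : Matrix (Fin 3) (Fin 3) ℂ,
        Umatᴴ * PhiMap a b c θ X * Umat = PhiMap a b c (θ - 2 * Real.pi / 3) X) ∧
    pTheta θ = pTheta (θ - 2 * Real.pi / 3) ∧
    ∀ t : ℝ, 0 < t → ∀ X : Matrix (Fin 3) (Fin 3) ℂ,
        Umatᴴ * PhiT θ t X * Umat = PhiT (θ - 2 * Real.pi / 3) t X := by
  refine ⟨Umat_conjTranspose_mul_PhiMap_mul_Umat a b c θ,
    (pTheta_sub_two_pi_div_three θ).symm, fun t _ X => ?_⟩
  rw [PhiT, PhiT, pTheta_sub_two_pi_div_three]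
  exact Umat_conjTranspose_mul_PhiMap_mul_Umat _ _ _ θ X
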